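/- arXiv:1211.2625 — 2 statements merged into one kernel-verified Lean document; each statement's English description precedes it below -/
import Mathlib

section
/- Let ψ : R → A be a homomorphism of commutative rings. Suppose that Spec R is connected and that for every prime ideal 𝔭 of R the spectrum Spec A_𝔭 is connected, where A_𝔭 denotes the localization of A at (the image of) the multiplicative set R ∖ 𝔭. Then Spec A is connected. -/
/-- An idempotent which is nilpotent is zero. -/
lemma idem_eq_zero_of_nilpotent {B : Type*} [CommRing B] {e : B}
    (he : IsIdempotentElem e) (hn : IsNilpotent e) : e = 0 := by
  obtain ⟨n, hn⟩ := hn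
  calc e = e ^ (n + 1) := (he.pow_succ_eq n).symm
  _ = e ^ n * e := by ring
  _ = 0 := by rw [hn, zero_mul]

/-- In a ring with connected prime spectrum, the only idempotents are 0 and 1. -/
lemma idem_eq_zero_or_one_of_connected {B : Type*} [CommRing B]
    (h : ConnectedSpace (PrimeSpectrum B)) {e : B} (he : IsIdempotentElem e) :
    e = 0 ∨ e = 1 := by
  have hclopen : IsClopen (↑(PrimeSpectrum.basicOpen e) : Set (PrimeSpectrum B)) :=
    PrimeSpectrum.isClopen_iff.mpr ⟨e, he, rfl⟩
  rcases isClopen_iff.mp hclopen with hbot | htop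
  · left
    refine idem_eq_zero_of_nilpotent he ((PrimeSpectrum.basicOpen_eq_bot_iff e).mp ?_)
    ext x
    simp [show (↑(PrimeSpectrum.basicOpen e) : Set (PrimeSpectrum B)) = ∅ from hbot]
  · right
    have h2 : PrimeSpectrum.zeroLocus {e} = (↑(PrimeSpectrum.basicOpen e) : Set (PrimeSpectrum B))ᶜ := by
      rw [PrimeSpectrum.basicOpen_eq_zeroLocus_compl, compl_compl]
    have hz : (↑(PrimeSpectrum.basicOpen (1 - e)) : Set (PrimeSpectrum B)) = ∅ := by
      rw [← PrimeSpectrum.zeroLocus_eq_basicOpen_of_isIdempotentElem e he, h2, htop,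
        Set.compl_univ]
    have h1 : (1 : B) - e = 0 := by
      refine idem_eq_zero_of_nilpotent he.one_sub
        ((PrimeSpectrum.basicOpen_eq_bot_iff (1 - e)).mp ?_)
      ext x; simp [hz]
    linear_combination -h1

/-- The "annihilator pullback" ideal: elements `r` of `R` with `ψ r * e = 0`. -/
def annComap {R A : Type*} [CommRing R] [CommRing A] (ψ : R →+* A) (e : A) : Ideal R where
  carrier := {r | ψ r * e = 0}
  add_mem' := by
    intro a b ha hb
    simp only [Set.mem_setOf_eq, map_add, add_mul] at *
    rw [ha, hb, add_zero]
  zero_mem' := by simp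
  smul_mem' := by
    intro c x hx
    simp only [Set.mem_setOf_eq, smul_eq_mul, map_mul, mul_assoc] at *
    rw [hx, mul_zero]

/-- Theorem `theoremlocal`: Let `ψ : R → A` be a ring homomorphism.
If `Spec R` is connected and for every prime ideal `𝔭` of `R` the spectrum of the
localization `A_𝔭 = A_{ψ(R∖𝔭)}` is connected, then `Spec A` is connected. -/
theorem spec_connected_of_locally_connected_over_base
    (R A : Type*) [CommRing R] [CommRing A] (ψ : R →+* A)
    (hR : ConnectedSpace (PrimeSpectrum R))
    (hloc : ∀ (p : Ideal R) [p.IsPrime],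
      ConnectedSpace (PrimeSpectrum (Localization (Submonoid.map ψ p.primeCompl)))) :
    ConnectedSpace (PrimeSpectrum A) := by
  -- `A` is nontrivial
  obtain ⟨q⟩ := hR.toNonempty
  haveI : Nontrivial A := by
    by_contra hA
    rw [not_nontrivial_iff_subsingleton] at hA
    haveI := q.isPrime
    obtain ⟨x⟩ := (hloc q.asIdeal).toNonempty
    have h0mem : (0 : A) ∈ Submonoid.map ψ q.asIdeal.primeCompl :=
      ⟨1, q.asIdeal.primeCompl.one_mem, Subsingleton.elim _ _⟩
    haveI : Subsingleton (Localization (Submonoid.map ψ q.asIdeal.primeCompl)) :=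
      IsLocalization.subsingleton h0mem
    exact x.isPrime.ne_top (Subsingleton.elim _ _)
  -- key: every idempotent of `A` is 0 or 1
  have key : ∀ e : A, IsIdempotentElem e → e = 0 ∨ e = 1 := by
    intro e he
    set J0 : Ideal R := annComap ψ e with hJ0
    set J1 : Ideal R := annComap ψ (1 - e) with hJ1
    set U0 : Set (PrimeSpectrum R) := (PrimeSpectrum.zeroLocus (J0 : Set R))ᶜ with hU0
    set U1 : Set (PrimeSpectrum R) := (PrimeSpectrum.zeroLocus (J1 : Set R))ᶜ with hU1
    have hU0open : IsOpen U0 := (PrimeSpectrum.isClosed_zeroLocus _).isOpen_compl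
    have hU1open : IsOpen U1 := (PrimeSpectrum.isClosed_zeroLocus _).isOpen_compl
    -- covering
    have hcover : U0 ∪ U1 = Set.univ := by
      ext p
      simp only [Set.mem_univ, iff_true, Set.mem_union, hU0, hU1, Set.mem_compl_iff,
        PrimeSpectrum.mem_zeroLocus, SetLike.coe_subset_coe]
      haveI := p.isPrime
      haveI hc := hloc p.asIdeal
      set M := Submonoid.map ψ p.asIdeal.primeCompl with hM
      set L := Localization M with hL
      have he' : IsIdempotentElem (algebraMap A L e) := by
        simpa [IsIdempotentElem, ← map_mul] using congrArg (algebraMap A L) he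
      rcases idem_eq_zero_or_one_of_connected hc he' with h0 | h1
      · left
        obtain ⟨⟨m, r, hr, rfl⟩, hm⟩ := (IsLocalization.map_eq_zero_iff M L e).mp h0
        intro hle
        exact hr (hle hm)
      · right
        have h0' : algebraMap A L (1 - e) = 0 := by
          rw [map_sub, map_one, h1, sub_self]
        obtain ⟨⟨m, r, hr, rfl⟩, hm⟩ := (IsLocalization.map_eq_zero_iff M L (1 - e)).mp h0'
        intro hle
        exact hr (hle hm)
    -- disjointness
    have hdisj : U0 ∩ U1 = ∅ := by
      by_contra hne
      obtain ⟨p, hp0, hp1⟩ := Set.nonempty_iff_ne_empty.mpr hne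
      haveI := p.isPrime
      simp only [hU0, hU1, Set.mem_compl_iff, PrimeSpectrum.mem_zeroLocus,
        SetLike.coe_subset_coe] at hp0 hp1
      obtain ⟨r0, hr0J, hr0p⟩ := SetLike.not_le_iff_exists.mp hp0
      obtain ⟨r1, hr1J, hr1p⟩ := SetLike.not_le_iff_exists.mp hp1
      have hmul : ψ (r0 * r1) = 0 := by
        have h0 : ψ r0 * e = 0 := hr0J
        have h1 : ψ r1 * (1 - e) = 0 := hr1J
        have heq : ψ (r0 * r1) = ψ r1 * (ψ r0 * e) + ψ r0 * (ψ r1 * (1 - e)) := by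
          rw [map_mul]; ring
        rw [heq, h0, h1, mul_zero, mul_zero, add_zero]
      haveI hc := hloc p.asIdeal
      obtain ⟨x⟩ := hc.toNonempty
      have h0mem : (0 : A) ∈ Submonoid.map ψ p.asIdeal.primeCompl :=
        ⟨r0 * r1, mul_mem hr0p hr1p, hmul⟩
      haveI : Subsingleton (Localization (Submonoid.map ψ p.asIdeal.primeCompl)) :=
        IsLocalization.subsingleton h0mem
      exact x.isPrime.ne_top (Subsingleton.elim _ _)
    -- U0 is clopen in the connected space Spec R
    have hcompl : U0 = U1ᶜ := by
      ext x
      constructor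
      · intro hx hx1
        have : x ∈ U0 ∩ U1 := ⟨hx, hx1⟩
        rw [hdisj] at this
        exact this
      · intro hx
        rcases (hcover ▸ Set.mem_univ x : x ∈ U0 ∪ U1) with h | h
        · exact h
        · exact absurd h hx
    have hclopen : IsClopen U0 := by
      refine ⟨?_, hU0open⟩
      rw [hcompl]
      exact hU1open.isClosed_compl
    rcases isClopen_iff.mp hclopen with h0 | h0
    · -- U0 empty, so U1 = univ, so J1 = ⊤, so e = 1
      right
      have hJ1top : J1 = ⊤ := by
        by_contra hne
        obtain ⟨m, hm, hle⟩ := Ideal.exists_le_maximal J1 hne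
        haveI := hm.isPrime
        have hU1univ : U1 = Set.univ := by
          have hc' : U1ᶜ = ∅ := by rw [← hcompl, h0]
          rw [← compl_compl U1, hc', Set.compl_empty]
        have hmem : (⟨m, hm.isPrime⟩ : PrimeSpectrum R) ∈ U1 := by
          rw [hU1univ]; trivial
        simp only [hU1, Set.mem_compl_iff, PrimeSpectrum.mem_zeroLocus,
          SetLike.coe_subset_coe] at hmem
        exact hmem hle
      have h1 : ψ 1 * (1 - e) = 0 := by
        have : (1 : R) ∈ J1 := hJ1top ▸ Submodule.mem_top
        exact this
      rw [map_one, one_mul, sub_eq_zero] at h1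
      exact h1.symm
    · -- U0 = univ, so J0 = ⊤, so e = 0
      left
      have hJ0top : J0 = ⊤ := by
        by_contra hne
        obtain ⟨m, hm, hle⟩ := Ideal.exists_le_maximal J0 hne
        haveI := hm.isPrime
        have hmem : (⟨m, hm.isPrime⟩ : PrimeSpectrum R) ∈ U0 := by rw [h0]; trivial
        simp only [hU0, Set.mem_compl_iff, PrimeSpectrum.mem_zeroLocus,
          SetLike.coe_subset_coe] at hmem
        exact hmem hle
      have h1 : ψ 1 * e = 0 := by
        have : (1 : R) ∈ J0 := hJ0top ▸ Submodule.mem_top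
        exact this
      rwa [map_one, one_mul] at h1
  -- conclude connectedness of Spec A
  haveI hpre : PreconnectedSpace (PrimeSpectrum A) := by
    constructor
    intro u v hu hv hcov hune hvne
    by_contra hcon
    rw [Set.not_nonempty_iff_eq_empty] at hcon
    have huv : u ∩ v = ∅ := by
      ext x; constructor
      · intro hx
        have : x ∈ Set.univ ∩ (u ∩ v) := ⟨trivial, hx⟩
        rw [hcon] at this; exact this
      · intro hx; exact absurd hx (Set.notMem_empty x)
    have hvc : v = uᶜ := by
      apply Set.eq_of_subset_of_subset
      · intro x hx hxu
        have : x ∈ u ∩ v := ⟨hxu, hx⟩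
        rw [huv] at this; exact this
      · intro x hx
        rcases hcov (Set.mem_univ x) with h | h
        · exact absurd h hx
        · exact h
    have hcl : IsClopen u := by
      refine ⟨?_, hu⟩
      rw [← compl_compl u, ← hvc]
      exact hv.isClosed_compl
    obtain ⟨e, he, hs⟩ := PrimeSpectrum.isClopen_iff.mp hcl
    rcases key e he with rfl | rfl
    · obtain ⟨x, -, hx⟩ := hune
      rw [hs] at hx
      simp [PrimeSpectrum.basicOpen_zero] at hx
    · obtain ⟨x, -, hx⟩ := hvne
      rw [hvc, hs] at hx
      simp [PrimeSpectrum.basicOpen_one] at hx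
  exact ⟨inferInstance⟩
end

section
/- Let R be a noetherian integral domain of Krull dimension 1, let f_1,…,f_n, f ∈ R with I = (f_1,…,f_n) ≠ 0, and let A = R[T_1,…,T_n]/(f_1T_1+⋯+f_nT_n+f) be the forcing algebra. Then Spec A is connected if and only if for every prime ideal 𝔭 of R the spectrum Spec A_{R∖𝔭} is connected, where A_{R∖𝔭} is the localization of A at the multiplicative set R ∖ 𝔭. -/
set_option maxHeartbeats 1600000
set_option synthInstance.maxHeartbeats 400000
set_option linter.unusedSectionVars false

open MvPolynomial

/-- The forcing equation `h = f_1T_1+⋯+f_nT_n+f₀` in `B = R[T_1,…,T_n]`. -/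
noncomputable abbrev forcingPoly (R : Type*) [CommRing R] (n : ℕ) (f : Fin n → R) (f₀ : R) :
    MvPolynomial (Fin n) R :=
  (∑ i : Fin n, C (f i) * X i) + C f₀

namespace ForcingAux


lemma map_forcingPoly {R S : Type*} [CommRing R] [CommRing S] (φ : R →+* S) (n : ℕ)
    (f : Fin n → R) (f₀ : R) :
    MvPolynomial.map φ (forcingPoly R n f f₀) =
      forcingPoly S n (fun i => φ (f i)) (φ f₀) := by
  simp [forcingPoly, map_sum]

section elim

variable {S : Type*} [CommRing S] {n : ℕ} (c : Fin n → S) (c₀ : S) {i₀ : Fin n}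
  (hu : IsUnit (c i₀))

noncomputable def elimHom : MvPolynomial (Fin n) S →+* MvPolynomial (Fin n) S :=
  (aeval (fun j => if j = i₀ then X i₀ - C (↑hu.unit⁻¹ : S) * forcingPoly S n c c₀
    else X j)).toRingHom

lemma elimHom_C (s : S) : elimHom c c₀ hu (C s) = C s := by
  simp [elimHom, algebraMap_eq]

lemma elimHom_X {j : Fin n} :
    elimHom c c₀ hu (X j) =
      if j = i₀ then X i₀ - C (↑hu.unit⁻¹ : S) * forcingPoly S n c c₀ else X j := by
  simp [elimHom]

lemma elimHom_forcing : elimHom c c₀ hu (forcingPoly S n c c₀) = 0 := by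
  classical
  have hC : (C (c i₀) : MvPolynomial (Fin n) S) * C (↑hu.unit⁻¹ : S) = 1 := by
    rw [← C_mul, hu.mul_val_inv, C_1]
  have h1 : elimHom c c₀ hu (forcingPoly S n c c₀)
      = (∑ i : Fin n, C (c i) * (if i = i₀ then
          X i₀ - C (↑hu.unit⁻¹ : S) * forcingPoly S n c c₀ else X i)) + C c₀ := by
    simp [forcingPoly, map_sum, elimHom_C, elimHom_X]
  have h2 : ∀ i : Fin n, C (c i) * (if i = i₀ then
        X i₀ - C (↑hu.unit⁻¹ : S) * forcingPoly S n c c₀ else X i)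
      = C (c i) * X i - (if i = i₀ then
          C (c i₀) * (C (↑hu.unit⁻¹ : S) * forcingPoly S n c c₀) else 0) := by
    intro i
    by_cases h : i = i₀ <;> simp [h, mul_sub]
  rw [h1, Finset.sum_congr rfl (fun i _ => h2 i), Finset.sum_sub_distrib,
    Finset.sum_ite_eq' Finset.univ i₀
      (fun _ => C (c i₀) * (C (↑hu.unit⁻¹ : S) * forcingPoly S n c c₀))]
  simp only [Finset.mem_univ, if_true, ← mul_assoc, hC, one_mul]
  have hfp : forcingPoly S n c c₀ = (∑ i : Fin n, C (c i) * X i) + C c₀ := rfl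
  rw [hfp]; ring

lemma ker_elimHom : RingHom.ker (elimHom c c₀ hu) = Ideal.span {forcingPoly S n c c₀} := by
  classical
  have hdiff : ∀ g : MvPolynomial (Fin n) S,
      g - elimHom c c₀ hu g ∈ Ideal.span {forcingPoly S n c c₀} := by
    intro g
    induction g using MvPolynomial.induction_on with
    | C a => rw [elimHom_C, sub_self]; exact Ideal.zero_mem _
    | add p q hp hq =>
        rw [map_add, show p + q - (elimHom c c₀ hu p + elimHom c c₀ hu q)
          = (p - elimHom c c₀ hu p) + (q - elimHom c c₀ hu q) by ring]
        exact Ideal.add_mem _ hp hq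
    | mul_X p j hp =>
        rw [map_mul, elimHom_X,
          show p * X j - elimHom c c₀ hu p * (if j = i₀ then
              X i₀ - C (↑hu.unit⁻¹ : S) * forcingPoly S n c c₀ else X j)
            = (p - elimHom c c₀ hu p) * X j
              + elimHom c c₀ hu p * (X j - (if j = i₀ then
                X i₀ - C (↑hu.unit⁻¹ : S) * forcingPoly S n c c₀ else X j)) by ring]
        refine Ideal.add_mem _ (Ideal.mul_mem_right _ _ hp) ?_
        by_cases h : j = i₀
        · subst h
          simp only [if_true]
          rw [show X j - (X j - C (↑hu.unit⁻¹ : S) * forcingPoly S n c c₀)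
            = C (↑hu.unit⁻¹ : S) * forcingPoly S n c c₀ by ring]
          exact Ideal.mul_mem_left _ _ (Ideal.mul_mem_left _ _ (Ideal.mem_span_singleton_self _))
        · simp only [h, if_false, sub_self, mul_zero]
          exact Ideal.zero_mem _
  apply le_antisymm
  · intro g hg
    have : g = g - elimHom c c₀ hu g := by
      rw [RingHom.mem_ker] at hg; rw [hg, sub_zero]
    rw [this]; exact hdiff g
  · rw [Ideal.span_le, Set.singleton_subset_iff]
    exact elimHom_forcing c c₀ hu

include hu in
lemma span_forcing_isPrime [IsDomain S] :
    (Ideal.span {forcingPoly S n c c₀}).IsPrime := by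
  rw [← ker_elimHom c c₀ hu]
  exact RingHom.ker_isPrime _

include hu in
lemma eq_zero_of_C_mem_span (s : S) (h : C s ∈ Ideal.span {forcingPoly S n c c₀}) :
    s = 0 := by
  rw [← ker_elimHom c c₀ hu, RingHom.mem_ker, elimHom_C] at h
  exact C_injective _ _ (by rw [h, map_zero])

end elim

section main
attribute [local instance] MvPolynomial.algebraMvPolynomial

variable {R : Type*} [CommRing R] [IsDomain R] {n : ℕ} (f : Fin n → R) (f₀ : R)

/-- The generic prime of the forcing algebra, at the polynomial-ring level. -/
noncomputable def etaB : Ideal (MvPolynomial (Fin n) R) :=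
  Ideal.comap (MvPolynomial.map (algebraMap R (FractionRing R)))
    (Ideal.span {forcingPoly (FractionRing R) n
      (fun i => algebraMap R (FractionRing R) (f i)) (algebraMap R (FractionRing R) f₀)})

variable {f f₀}

lemma spanK_isPrime (hf : ∃ i, f i ≠ 0) :
    (Ideal.span {forcingPoly (FractionRing R) n
      (fun i => algebraMap R (FractionRing R) (f i))
      (algebraMap R (FractionRing R) f₀)}).IsPrime := by
  obtain ⟨i₀, hi₀⟩ := hf
  refine span_forcing_isPrime _ _ (i₀ := i₀) (isUnit_iff_ne_zero.mpr ?_)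
  simpa [map_eq_zero_iff _ (IsFractionRing.injective R (FractionRing R))] using hi₀

lemma span_le_etaB : Ideal.span {forcingPoly R n f f₀} ≤ etaB f f₀ := by
  rw [Ideal.span_le, Set.singleton_subset_iff]
  show _ ∈ Ideal.comap _ _
  rw [Ideal.mem_comap, map_forcingPoly]
  exact Ideal.mem_span_singleton_self _

lemma etaB_isPrime (hf : ∃ i, f i ≠ 0) : (etaB f f₀).IsPrime :=
  (spanK_isPrime hf).comap _

lemma eq_zero_of_C_mem_etaB (hf : ∃ i, f i ≠ 0) {r : R} (h : C r ∈ etaB f f₀) : r = 0 := by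
  obtain ⟨i₀, hi₀⟩ := hf
  rw [etaB, Ideal.mem_comap, map_C] at h
  have := eq_zero_of_C_mem_span _ _ (i₀ := i₀) (isUnit_iff_ne_zero.mpr (by
    simpa [map_eq_zero_iff _ (IsFractionRing.injective R (FractionRing R))] using hi₀)) _ h
  exact (map_eq_zero_iff _ (IsFractionRing.injective R (FractionRing R))).mp this

lemma etaB_clear {g : MvPolynomial (Fin n) R} (hg : g ∈ etaB f f₀) :
    ∃ s : R, s ≠ 0 ∧ C s * g ∈ Ideal.span {forcingPoly R n f f₀} := by
  classical
  set K := FractionRing R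
  set φ := algebraMap (MvPolynomial (Fin n) R) (MvPolynomial (Fin n) K) with hφ
  have hφdef : φ = MvPolynomial.map (algebraMap R K) := MvPolynomial.algebraMap_def
  have hMle : (Submonoid.map (C : R →+* MvPolynomial (Fin n) R) (nonZeroDivisors R)) ≤
      nonZeroDivisors (MvPolynomial (Fin n) R) := by
    rintro x ⟨s, hs, rfl⟩
    exact mem_nonZeroDivisors_of_ne_zero (by
      simpa using nonZeroDivisors.ne_zero hs)
  have hinj : Function.Injective φ := IsLocalization.injective _ hMle
  rw [etaB, Ideal.mem_comap, ← hφdef] at hg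
  obtain ⟨w, hw⟩ := Ideal.mem_span_singleton'.mp hg
  obtain ⟨⟨b, t⟩, ht⟩ := IsLocalization.surj
    (M := (nonZeroDivisors R).map (C : R →+* MvPolynomial (Fin n) R)) w
  obtain ⟨s, hs, hts⟩ := t.2
  refine ⟨s, nonZeroDivisors.ne_zero hs, ?_⟩
  have key : φ (C s * g) = φ (b * forcingPoly R n f f₀) := by
    have hKh : forcingPoly K n (fun i => algebraMap R K (f i)) (algebraMap R K f₀)
        = φ (forcingPoly R n f f₀) := by rw [hφdef, map_forcingPoly]
    calc φ (C s * g) = φ (C s) * φ g := by rw [map_mul]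
    _ = φ t.1 * (w * forcingPoly K n (fun i => algebraMap R K (f i)) (algebraMap R K f₀)) := by
        rw [hts, hw]
    _ = (w * φ t.1) * φ (forcingPoly R n f f₀) := by rw [hKh]; ring
    _ = φ b * φ (forcingPoly R n f f₀) := by rw [ht]
    _ = φ (b * forcingPoly R n f f₀) := by rw [map_mul]
  have := hinj key
  rw [this]
  exact Ideal.mul_mem_left _ _ (Ideal.mem_span_singleton_self _)

lemma etaB_le_of_prime {Q : Ideal (MvPolynomial (Fin n) R)} (hQ : Q.IsPrime)
    (hh : forcingPoly R n f f₀ ∈ Q) {i : Fin n} (hi : C (f i) ∉ Q) :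
    etaB f f₀ ≤ Q := by
  classical
  have hfi : f i ≠ 0 := fun h => hi (by rw [h, map_zero]; exact Q.zero_mem)
  set Sl := Localization.Away (f i)
  haveI : IsDomain Sl := IsLocalization.isDomain_localization
    (powers_le_nonZeroDivisors_of_noZeroDivisors hfi)
  have hu : IsUnit (algebraMap R Sl (f i)) := IsLocalization.Away.algebraMap_isUnit (f i)
  set ψ := algebraMap (MvPolynomial (Fin n) R) (MvPolynomial (Fin n) Sl) with hψ
  have hψdef : ψ = MvPolynomial.map (algebraMap R Sl) := MvPolynomial.algebraMap_def
  have hdisj : Disjoint (((Submonoid.powers (f i)).map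
      (C : R →+* MvPolynomial (Fin n) R) : Submonoid (MvPolynomial (Fin n) R)) :
        Set (MvPolynomial (Fin n) R)) (Q : Set (MvPolynomial (Fin n) R)) := by
    rw [Set.disjoint_left]
    rintro x ⟨y, ⟨k, rfl⟩, rfl⟩ hxQ
    exact hi (hQ.mem_of_pow_mem k (by simpa [map_pow] using hxQ))
  intro g hg
  obtain ⟨s, hs, hsg⟩ := etaB_clear hg
  obtain ⟨b, hb⟩ := Ideal.mem_span_singleton'.mp hsg
  have h1 : ψ (C s) * ψ g ∈ Ideal.span {ψ (forcingPoly R n f f₀)} := by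
    rw [← map_mul, ← hb, map_mul]
    exact Ideal.mul_mem_left _ _ (Ideal.mem_span_singleton_self _)
  have hprime : (Ideal.span {ψ (forcingPoly R n f f₀)}).IsPrime := by
    rw [hψdef, map_forcingPoly]
    exact span_forcing_isPrime _ _ (i₀ := i) hu
  have hCs : ψ (C s) ∉ Ideal.span {ψ (forcingPoly R n f f₀)} := by
    rw [hψdef, map_forcingPoly, map_C]
    intro hmem
    have h0 := eq_zero_of_C_mem_span _ _ (i₀ := i) hu _ hmem
    rw [IsLocalization.map_eq_zero_iff (Submonoid.powers (f i))] at h0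
    obtain ⟨⟨m, k, rfl⟩, hm⟩ := h0
    exact hs (by
      have : f i ^ k * s = 0 := hm
      rcases mul_eq_zero.mp this with h | h
      · exact absurd h (pow_ne_zero _ hfi)
      · exact h)
  have hψg : ψ g ∈ Ideal.span {ψ (forcingPoly R n f f₀)} :=
    ((hprime.mem_or_mem h1).resolve_left hCs)
  have hcomap : Ideal.comap ψ (Q.map ψ) = Q :=
    IsLocalization.under_map_of_isPrime_disjoint _ _ hQ hdisj
  have hle : Ideal.span {ψ (forcingPoly R n f f₀)} ≤ Q.map ψ := by
    rw [Ideal.span_le, Set.singleton_subset_iff]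
    exact Ideal.mem_map_of_mem _ hh
  rw [← hcomap]
  exact hle hψg

end main

section krull
variable {R : Type*} [CommRing R] [IsDomain R]

lemma prime_eq_of_ne_bot (hdim : ringKrullDim R = 1) {a b : Ideal R} (ha : a.IsPrime)
    (hb : b.IsPrime) (h0 : a ≠ ⊥) (hab : a ≤ b) : a = b := by
  by_contra hne
  have hlt : a < b := lt_of_le_of_ne hab hne
  have h2 : (⊥ : Ideal R) < a := bot_lt_iff_ne_bot.mpr h0
  let x0 : PrimeSpectrum R := ⟨⊥, Ideal.bot_prime⟩
  let x1 : PrimeSpectrum R := ⟨a, ha⟩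
  let x2 : PrimeSpectrum R := ⟨b, hb⟩
  have hx01 : x0 < x1 := (PrimeSpectrum.asIdeal_lt_asIdeal x0 x1).mp h2
  have hx12 : x1 < x2 := (PrimeSpectrum.asIdeal_lt_asIdeal x1 x2).mp hlt
  let l : LTSeries (PrimeSpectrum R) :=
    { length := 2
      toFun := ![x0, x1, x2]
      step := by
        intro i
        fin_cases i
        · exact hx01
        · exact hx12 }
  have hlen := Order.LTSeries.length_le_krullDim l
  rw [show Order.krullDim (PrimeSpectrum R) = ringKrullDim R from rfl, hdim] at hlen
  have h21 : ((2 : ℕ) : WithBot (WithTop ℕ)) ≤ 1 := hlen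
  norm_num at h21

lemma finite_primes_over (hdim : ringKrullDim R = 1) [IsNoetherianRing R] {J : Ideal R}
    (hJ : J ≠ ⊥) : {p : Ideal R | p.IsPrime ∧ J ≤ p}.Finite := by
  have hfin : (minimalPrimes (R ⧸ J)).Finite := minimalPrimes.finite_of_isNoetherianRing _
  have himg : {p : Ideal R | p.IsPrime ∧ J ≤ p} ⊆
      (Ideal.comap (Ideal.Quotient.mk J)) '' (minimalPrimes (R ⧸ J)) := by
    rintro p ⟨hp, hJp⟩
    haveI := hp
    have hker : RingHom.ker (Ideal.Quotient.mk J) ≤ p := by rwa [Ideal.mk_ker]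
    have hmapP : (p.map (Ideal.Quotient.mk J)).IsPrime :=
      Ideal.map_isPrime_of_surjective Ideal.Quotient.mk_surjective hker
    have hcomap : Ideal.comap (Ideal.Quotient.mk J) (p.map (Ideal.Quotient.mk J)) = p := by
      rw [Ideal.comap_map_of_surjective _ Ideal.Quotient.mk_surjective,
        ← RingHom.ker_eq_comap_bot, Ideal.mk_ker, sup_eq_left.mpr hJp]
    refine ⟨p.map (Ideal.Quotient.mk J), ?_, hcomap⟩
    constructor
    · exact ⟨hmapP, bot_le⟩
    · rintro q ⟨hq, -⟩ hle
      have hqc : (Ideal.comap (Ideal.Quotient.mk J) q).IsPrime := hq.comap _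
      have hJq : J ≤ Ideal.comap (Ideal.Quotient.mk J) q := by
        intro x hx
        rw [Ideal.mem_comap, Ideal.Quotient.eq_zero_iff_mem.mpr hx]
        exact q.zero_mem
      have hle' : Ideal.comap (Ideal.Quotient.mk J) q ≤ p := by
        rw [← hcomap]; exact Ideal.comap_mono hle
      have heq : Ideal.comap (Ideal.Quotient.mk J) q = p :=
        prime_eq_of_ne_bot hdim hqc hp (fun h => hJ (le_bot_iff.mp (h ▸ hJq))) hle'
      have : q = p.map (Ideal.Quotient.mk J) := by
        rw [← heq, Ideal.map_comap_of_surjective _ Ideal.Quotient.mk_surjective]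
      rw [this]
  exact (hfin.image _).subset himg

end krull

section quot
variable {R : Type*} [CommRing R] [IsDomain R] {n : ℕ} (f : Fin n → R) (f₀ : R)

/-- The vanishing prime `ξ_𝔭` at the polynomial level: kernel of coefficientwise
reduction mod `p`. -/
noncomputable def xiB (p : Ideal R) : Ideal (MvPolynomial (Fin n) R) :=
  RingHom.ker (MvPolynomial.map (Ideal.Quotient.mk p) : _ →+* MvPolynomial (Fin n) (R ⧸ p))

variable {f f₀}

lemma xiB_isPrime {p : Ideal R} (hp : p.IsPrime) : (xiB (n := n) p).IsPrime := by
  haveI : IsDomain (R ⧸ p) := Ideal.Quotient.isDomain p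
  exact RingHom.ker_isPrime _

lemma mem_xiB_iff {p : Ideal R} {g : MvPolynomial (Fin n) R} :
    g ∈ xiB (n := n) p ↔ ∀ m, coeff m g ∈ p := by
  rw [xiB, RingHom.mem_ker, MvPolynomial.ext_iff]
  refine forall_congr' fun m => ?_
  rw [coeff_map, coeff_zero, Ideal.Quotient.eq_zero_iff_mem]

lemma forcing_mem_xiB {p : Ideal R} (hfi : ∀ i, f i ∈ p) (h0 : f₀ ∈ p) :
    forcingPoly R n f f₀ ∈ xiB (n := n) p := by
  rw [xiB, RingHom.mem_ker, map_forcingPoly]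
  have h1 : ∀ i, Ideal.Quotient.mk p (f i) = 0 :=
    fun i => Ideal.Quotient.eq_zero_iff_mem.mpr (hfi i)
  have h2 : Ideal.Quotient.mk p f₀ = 0 := Ideal.Quotient.eq_zero_iff_mem.mpr h0
  simp [forcingPoly, h1, h2]

lemma xiB_le_of_C_le {p : Ideal R} {Q : Ideal (MvPolynomial (Fin n) R)}
    (hQC : ∀ r ∈ p, C r ∈ Q) : xiB (n := n) p ≤ Q := by
  classical
  intro g hg
  rw [mem_xiB_iff] at hg
  have hrep : g = ∑ m ∈ g.support, C (coeff m g) * monomial m 1 := by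
    conv_lhs => rw [g.as_sum]
    refine Finset.sum_congr rfl fun m _ => ?_
    rw [C_mul_monomial, mul_one]
  rw [hrep]
  exact Ideal.sum_mem _ fun m _ => Ideal.mul_mem_right _ _ (hQC _ (hg m))

lemma C_mem_xiB_iff {p : Ideal R} {r : R} : C r ∈ xiB (n := n) p ↔ r ∈ p := by
  rw [xiB, RingHom.mem_ker, map_C]
  constructor
  · intro h
    have h0 : (C ((Ideal.Quotient.mk p) r) : MvPolynomial (Fin n) (R ⧸ p)) = C 0 := by
      rw [h, map_zero]
    exact Ideal.Quotient.eq_zero_iff_mem.mp (MvPolynomial.C_injective (Fin n) (R ⧸ p) h0)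
  · intro h
    rw [Ideal.Quotient.eq_zero_iff_mem.mpr h, map_zero]

end quot

section spec
variable {R : Type*} [CommRing R] [IsDomain R] {n : ℕ} {f : Fin n → R} {f₀ : R}

local notation "A" => MvPolynomial (Fin n) R ⧸ Ideal.span {forcingPoly R n f f₀}

lemma algebraMap_A_eq (r : R) :
    algebraMap R A r = Ideal.Quotient.mk (Ideal.span {forcingPoly R n f f₀}) (C r) := rfl

lemma comap_map_mk {Q : Ideal (MvPolynomial (Fin n) R)}
    (hQ : Ideal.span {forcingPoly R n f f₀} ≤ Q) :
    Ideal.comap (Ideal.Quotient.mk (Ideal.span {forcingPoly R n f f₀}))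
      (Q.map (Ideal.Quotient.mk (Ideal.span {forcingPoly R n f f₀}))) = Q := by
  rw [Ideal.comap_map_of_surjective _ Ideal.Quotient.mk_surjective,
    ← RingHom.ker_eq_comap_bot, Ideal.mk_ker, sup_eq_left.mpr hQ]

/-- The generic point of `Spec A`. -/
noncomputable def etaPt (hf : ∃ i, f i ≠ 0) : PrimeSpectrum A :=
  ⟨(etaB f f₀).map (Ideal.Quotient.mk (Ideal.span {forcingPoly R n f f₀})), by
    haveI := etaB_isPrime (f₀ := f₀) hf
    exact Ideal.map_isPrime_of_surjective Ideal.Quotient.mk_surjective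
      (by rw [Ideal.mk_ker]; exact span_le_etaB)⟩

/-- The point of `Spec A` corresponding to the "fiber" component over a prime `p`
containing all the data. -/
noncomputable def xiPt (p : Ideal R) (hp : p.IsPrime) (hfi : ∀ i, f i ∈ p) (h0 : f₀ ∈ p) :
    PrimeSpectrum A :=
  ⟨(xiB (n := n) p).map (Ideal.Quotient.mk (Ideal.span {forcingPoly R n f f₀})), by
    haveI := xiB_isPrime (n := n) hp
    exact Ideal.map_isPrime_of_surjective Ideal.Quotient.mk_surjective
      (by
        rw [Ideal.mk_ker, Ideal.span_le, Set.singleton_subset_iff]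
        exact forcing_mem_xiB hfi h0)⟩

lemma etaPt_le_iff (hf : ∃ i, f i ≠ 0) (q : PrimeSpectrum A) :
    etaPt hf ≤ q ↔ etaB f f₀ ≤ q.asIdeal.comap (Ideal.Quotient.mk (Ideal.span {forcingPoly R n f f₀})) := by
  rw [← PrimeSpectrum.asIdeal_le_asIdeal]
  exact Ideal.map_le_iff_le_comap

lemma xiPt_le_iff (p : Ideal R) (hp : p.IsPrime) (hfi : ∀ i, f i ∈ p) (h0 : f₀ ∈ p)
    (q : PrimeSpectrum A) :
    xiPt p hp hfi h0 ≤ q ↔ xiB (n := n) p ≤ q.asIdeal.comap (Ideal.Quotient.mk (Ideal.span {forcingPoly R n f f₀})) := by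
  rw [← PrimeSpectrum.asIdeal_le_asIdeal]
  exact Ideal.map_le_iff_le_comap

lemma st1 (hf : ∃ i, f i ≠ 0) (q : PrimeSpectrum A) {i : Fin n}
    (hi : algebraMap R A (f i) ∉ q.asIdeal) : etaPt hf ≤ q := by
  rw [etaPt_le_iff]
  refine etaB_le_of_prime (Ideal.IsPrime.comap _) ?_ (i := i) ?_
  · rw [Ideal.mem_comap, Ideal.Quotient.eq_zero_iff_mem.mpr (Ideal.mem_span_singleton_self _)]
    exact q.asIdeal.zero_mem
  · rw [Ideal.mem_comap]
    exact hi

lemma st2 (q : PrimeSpectrum A) (hall : ∀ i, algebraMap R A (f i) ∈ q.asIdeal) :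
    algebraMap R A f₀ ∈ q.asIdeal := by
  have hCf : (C f₀ : MvPolynomial (Fin n) R)
      = forcingPoly R n f f₀ - ∑ i : Fin n, C (f i) * X i := by
    show _ = ((∑ i : Fin n, C (f i) * X i) + C f₀) - _
    ring
  have hforcing : Ideal.Quotient.mk (Ideal.span {forcingPoly R n f f₀})
      (forcingPoly R n f f₀) = 0 :=
    Ideal.Quotient.eq_zero_iff_mem.mpr (Ideal.mem_span_singleton_self _)
  rw [algebraMap_A_eq, hCf, map_sub, hforcing, zero_sub, map_sum]
  refine neg_mem (Ideal.sum_mem _ fun i _ => ?_)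
  rw [map_mul]
  exact Ideal.mul_mem_right _ _ (hall i)

lemma st3 (q : PrimeSpectrum A) {p : Ideal R} (hp : p.IsPrime) (hfi : ∀ i, f i ∈ p)
    (h0 : f₀ ∈ p) (hle : ∀ r ∈ p, algebraMap R A r ∈ q.asIdeal) :
    xiPt p hp hfi h0 ≤ q := by
  rw [xiPt_le_iff]
  exact xiB_le_of_C_le fun r hr => Ideal.mem_comap.mpr (hle r hr)

lemma st4 (hf : ∃ i, f i ≠ 0) :
    Ideal.comap (algebraMap R A) (etaPt hf).asIdeal = ⊥ := by
  ext r
  simp only [Ideal.mem_comap, Ideal.mem_bot]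
  constructor
  · intro h
    rw [algebraMap_A_eq, ← Ideal.mem_comap] at h
    rw [show (etaPt hf).asIdeal = (etaB f f₀).map (Ideal.Quotient.mk (Ideal.span {forcingPoly R n f f₀})) from rfl,
      comap_map_mk span_le_etaB] at h
    exact eq_zero_of_C_mem_etaB hf h
  · rintro rfl
    rw [map_zero]; exact (etaPt hf).asIdeal.zero_mem

lemma st5 {p : Ideal R} (hp : p.IsPrime) (hfi : ∀ i, f i ∈ p) (h0 : f₀ ∈ p) :
    Ideal.comap (algebraMap R A) (xiPt p hp hfi h0).asIdeal = p := by
  ext r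
  simp only [Ideal.mem_comap]
  rw [algebraMap_A_eq, ← Ideal.mem_comap,
    show (xiPt p hp hfi h0).asIdeal = (xiB (n := n) p).map (Ideal.Quotient.mk (Ideal.span {forcingPoly R n f f₀})) from rfl,
    comap_map_mk (by
      rw [Ideal.span_le, Set.singleton_subset_iff]; exact forcing_mem_xiB hfi h0),
    C_mem_xiB_iff]


/-- The ideal of the fiber point, without primality data. -/
noncomputable def xiIdeal (p : Ideal R) : Ideal A :=
  (xiB (n := n) p).map (Ideal.Quotient.mk (Ideal.span {forcingPoly R n f f₀}))

lemma xiPt_asIdeal {p : Ideal R} (hp : p.IsPrime) (hfi : ∀ i, f i ∈ p) (h0 : f₀ ∈ p) :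
    (xiPt p hp hfi h0).asIdeal = xiIdeal (f := f) (f₀ := f₀) p := rfl

lemma xiPt_congr {p p' : Ideal R} (h : p = p') (hp : p.IsPrime) (hfi : ∀ i, f i ∈ p)
    (h0 : f₀ ∈ p) (hp' : p'.IsPrime) (hfi' : ∀ i, f i ∈ p') (h0' : f₀ ∈ p') :
    xiPt p hp hfi h0 = xiPt p' hp' hfi' h0' := by
  subst h
  rfl

lemma nontrivialA (hf : ∃ i, f i ≠ 0) : Nontrivial A := by
  refine Ideal.Quotient.nontrivial_iff.mpr ?_
  intro htop
  have h1 : (C (1 : R) : MvPolynomial (Fin n) R) ∈ etaB f f₀ := by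
    refine span_le_etaB ?_
    rw [htop]
    exact Submodule.mem_top
  exact one_ne_zero (eq_zero_of_C_mem_etaB hf h1)

/-- The pivot condition: over every "special" prime of `R`, the fiber component meets the
closure of the generic point. -/
def Cond (hf : ∃ i, f i ≠ 0) : Prop :=
  ∀ (p : Ideal R) (hp : p.IsPrime) (hfi : ∀ i, f i ∈ p) (h0 : f₀ ∈ p),
    ∃ q : PrimeSpectrum A, xiPt p hp hfi h0 ≤ q ∧ etaPt hf ≤ q

lemma not_eta_le_imp (hf : ∃ i, f i ≠ 0) (q : PrimeSpectrum A) (hq : ¬ etaPt hf ≤ q) :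
    ∀ i, algebraMap R A (f i) ∈ q.asIdeal := by
  intro i
  by_contra hi
  exact hq (st1 hf q hi)

lemma pOf_isPrime (q : PrimeSpectrum A) :
    (Ideal.comap (algebraMap R A) q.asIdeal).IsPrime := by
  haveI := q.isPrime
  exact Ideal.IsPrime.comap _

lemma pOf_ne_bot (hf : ∃ i, f i ≠ 0) (q : PrimeSpectrum A)
    (hall : ∀ i, algebraMap R A (f i) ∈ q.asIdeal) :
    Ideal.comap (algebraMap R A) q.asIdeal ≠ ⊥ := by
  obtain ⟨i₀, hi₀⟩ := hf
  intro hbot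
  have : f i₀ ∈ Ideal.comap (algebraMap R A) q.asIdeal := Ideal.mem_comap.mpr (hall i₀)
  rw [hbot, Ideal.mem_bot] at this
  exact hi₀ this

/-- Core preconnectedness criterion. -/
lemma preconn_aux (hf : ∃ i, f i ≠ 0) (S : Set (PrimeSpectrum A)) (hη : etaPt hf ∈ S)
    (hstep : ∀ q ∈ S, ¬ etaPt hf ≤ q →
      ∃ x r : PrimeSpectrum A, x ∈ S ∧ r ∈ S ∧ etaPt hf ≤ r ∧ x ≤ q ∧ x ≤ r) :
    IsPreconnected S := by
  rw [isPreconnected_iff_subset_of_disjoint]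
  have claim : ∀ u v : Set (PrimeSpectrum A), IsOpen u → IsOpen v → S ⊆ u ∪ v →
      S ∩ (u ∩ v) = ∅ → etaPt hf ∈ u → S ⊆ u := by
    intro u v hu hv hcov hdisj hηu
    have hZcase : ∀ q' ∈ S, etaPt hf ≤ q' → q' ∈ u := by
      intro q' hq' hle
      rcases hcov hq' with h | h
      · exact h
      · exfalso
        have hcl : q' ∈ closure ({etaPt hf} : Set (PrimeSpectrum A)) :=
          (PrimeSpectrum.le_iff_mem_closure _ _).mp hle
        obtain ⟨y, hyv, hy⟩ := mem_closure_iff.mp hcl v hv h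
        rw [Set.mem_singleton_iff] at hy
        subst hy
        exact Set.eq_empty_iff_forall_notMem.mp hdisj (etaPt hf) ⟨hη, hηu, hyv⟩
    intro q hq
    by_cases hq2 : etaPt hf ≤ q
    · exact hZcase q hq hq2
    · obtain ⟨x, r, hxS, hrS, hηr, hxq, hxr⟩ := hstep q hq hq2
      have hru : r ∈ u := hZcase r hrS hηr
      have hxu : x ∈ u := by
        have hrx : r ∈ closure ({x} : Set (PrimeSpectrum A)) :=
          (PrimeSpectrum.le_iff_mem_closure _ _).mp hxr
        obtain ⟨y, hyu, hy⟩ := mem_closure_iff.mp hrx u hu hru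
        rw [Set.mem_singleton_iff] at hy
        subst hy
        exact hyu
      rcases hcov hq with h | h
      · exact h
      · exfalso
        have hqx : q ∈ closure ({x} : Set (PrimeSpectrum A)) :=
          (PrimeSpectrum.le_iff_mem_closure _ _).mp hxq
        obtain ⟨y, hyv, hy⟩ := mem_closure_iff.mp hqx v hv h
        rw [Set.mem_singleton_iff] at hy
        exact Set.eq_empty_iff_forall_notMem.mp hdisj x ⟨hxS, hxu, hy ▸ hyv⟩
  intro u v hu hv hcov hdisj
  rcases hcov hη with h | h
  · exact Or.inl (claim u v hu hv hcov hdisj h)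
  · refine Or.inr (claim v u hv hu ?_ ?_ h)
    · rwa [Set.union_comm]
    · rwa [Set.inter_comm v u]

lemma connected_of_cond (hdim : ringKrullDim R = 1) (hf : ∃ i, f i ≠ 0) (hc : Cond (f₀ := f₀) hf) :
    ConnectedSpace (PrimeSpectrum A) := by
  haveI := nontrivialA (f₀ := f₀) hf
  refine { toPreconnectedSpace := ⟨?_⟩, toNonempty := inferInstance }
  refine preconn_aux hf Set.univ (Set.mem_univ _) fun q _ hq2 => ?_
  have hall := not_eta_le_imp hf q hq2
  have h0 : algebraMap R A f₀ ∈ q.asIdeal := st2 q hall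
  set p := Ideal.comap (algebraMap R A) q.asIdeal with hp_def
  have hp : p.IsPrime := pOf_isPrime q
  have hfi : ∀ i, f i ∈ p := fun i => Ideal.mem_comap.mpr (hall i)
  have hf0 : f₀ ∈ p := Ideal.mem_comap.mpr h0
  obtain ⟨q', hxq', hηq'⟩ := hc p hp hfi hf0
  refine ⟨xiPt p hp hfi hf0, q', Set.mem_univ _, Set.mem_univ _, hηq', ?_, hxq'⟩
  exact st3 q hp hfi hf0 fun r hr => Ideal.mem_comap.mp hr

lemma cond_of_connected (hdim : ringKrullDim R = 1) [IsNoetherianRing R] (hf : ∃ i, f i ≠ 0)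
    (hconn : ConnectedSpace (PrimeSpectrum A)) : Cond (f₀ := f₀) hf := by
  intro p hp hfi h0
  by_contra hno
  push_neg at hno
  set ξ := xiPt p hp hfi h0 with hξ
  set W := PrimeSpectrum.zeroLocus (R := MvPolynomial (Fin n) R ⧸ Ideal.span {forcingPoly R n f f₀}) (ξ.asIdeal : Set A) with hW
  have hmemW : ∀ q : PrimeSpectrum A, q ∈ W ↔ ξ ≤ q := by
    intro q
    rw [hW, PrimeSpectrum.mem_zeroLocus]
    exact ⟨fun h => h, fun h => h⟩
  have hηW : etaPt hf ∉ W := by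
    rw [hmemW]
    intro hle
    exact hno (etaPt hf) hle le_rfl
  have hWne : ξ ∈ W := (hmemW ξ).mpr le_rfl
  -- the complement of W is closed
  set T := {p' : Ideal R | p'.IsPrime ∧ (∀ i, f i ∈ p') ∧ f₀ ∈ p' ∧ p' ≠ p} with hT
  have hTfin : T.Finite := by
    obtain ⟨i₀, hi₀⟩ := hf
    have hJ : Ideal.span {f i₀} ≠ ⊥ := by
      simp only [Ne, Ideal.span_singleton_eq_bot]
      exact hi₀
    refine (finite_primes_over hdim hJ).subset ?_
    rintro p' ⟨hp', hfi', h0', hne⟩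
    exact ⟨hp', by rw [Ideal.span_singleton_le_iff_mem]; exact hfi' i₀⟩
  have hcompl : Wᶜ = closure ({etaPt hf} : Set (PrimeSpectrum A)) ∪
      ⋃ p' ∈ T, PrimeSpectrum.zeroLocus ((xiIdeal (f := f) (f₀ := f₀) p' : Ideal A) : Set A) := by
    ext q
    simp only [Set.mem_compl_iff, Set.mem_union]
    constructor
    · intro hqW
      by_cases hη : etaPt hf ≤ q
      · exact Or.inl ((PrimeSpectrum.le_iff_mem_closure _ _).mp hη)
      · have hall := not_eta_le_imp hf q hη
        have h0' : algebraMap R A f₀ ∈ q.asIdeal := st2 q hall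
        set p' := Ideal.comap (algebraMap R A) q.asIdeal with hp'_def
        have hp' : p'.IsPrime := pOf_isPrime q
        have hfi' : ∀ i, f i ∈ p' := fun i => Ideal.mem_comap.mpr (hall i)
        have hf0' : f₀ ∈ p' := Ideal.mem_comap.mpr h0'
        have hne : p' ≠ p := by
          intro he
          apply hqW
          rw [hmemW, hξ]
          rw [xiPt_congr he.symm hp hfi h0 hp' hfi' hf0']
          exact st3 q hp' hfi' hf0' fun r hr => Ideal.mem_comap.mp hr
        refine Or.inr (Set.mem_biUnion ⟨hp', hfi', hf0', hne⟩ ?_)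
        rw [PrimeSpectrum.mem_zeroLocus, ← xiPt_asIdeal hp' hfi' hf0']
        exact st3 q hp' hfi' hf0' fun r hr => Ideal.mem_comap.mp hr
    · rintro (hcl | hin) hqW
      · rw [← PrimeSpectrum.le_iff_mem_closure] at hcl
        exact hno q ((hmemW q).mp hqW) hcl
      · obtain ⟨p', hp'T, hq⟩ := Set.mem_iUnion₂.mp hin
        rw [PrimeSpectrum.mem_zeroLocus, ← xiPt_asIdeal hp'T.1 hp'T.2.1 hp'T.2.2.1] at hq
        rw [hmemW] at hqW
        -- q contains both xiPt p' and xiPt p, so its contraction contains p' and p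
        have h1 : p ≤ Ideal.comap (algebraMap R A) q.asIdeal := by
          rw [← st5 hp hfi h0]
          exact Ideal.comap_mono hqW
        have h2 : p' ≤ Ideal.comap (algebraMap R A) q.asIdeal := by
          rw [← st5 hp'T.1 hp'T.2.1 hp'T.2.2.1]
          exact Ideal.comap_mono hq
        obtain ⟨i₀, hi₀⟩ := hf
        have hpbot : p ≠ ⊥ := fun h => hi₀ (by simpa [h] using hfi i₀)
        have hp'bot : p' ≠ ⊥ := fun h => hi₀ (by simpa [h] using hp'T.2.1 i₀)
        have he1 : p = Ideal.comap (algebraMap R A) q.asIdeal :=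
          prime_eq_of_ne_bot hdim hp (pOf_isPrime q) hpbot h1
        have he2 : p' = Ideal.comap (algebraMap R A) q.asIdeal :=
          prime_eq_of_ne_bot hdim hp'T.1 (pOf_isPrime q) hp'bot h2
        exact hp'T.2.2.2 (he2.trans he1.symm)
  have hWopen : IsOpen W := by
    rw [← isClosed_compl_iff, hcompl]
    refine IsClosed.union isClosed_closure ?_
    refine Set.Finite.isClosed_biUnion hTfin fun p' hp' => ?_
    exact PrimeSpectrum.isClosed_zeroLocus _
  have hWclopen : IsClopen W := ⟨PrimeSpectrum.isClosed_zeroLocus _, hWopen⟩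
  rcases (isClopen_iff.mp hWclopen) with h | h
  · rw [h] at hWne; exact hWne
  · rw [h] at hηW; exact hηW (Set.mem_univ _)

-- transfer lemma
lemma connected_loc_iff (hf : ∃ i, f i ≠ 0) (p : Ideal R) [hp : p.IsPrime] :
    ConnectedSpace (PrimeSpectrum (Localization (Submonoid.map
        (algebraMap R A) p.primeCompl))) ↔
      IsConnected {q : PrimeSpectrum A | Ideal.comap (algebraMap R A) q.asIdeal ≤ p} := by
  set M := Submonoid.map (algebraMap R A) p.primeCompl with hM
  have hrange : Set.range (PrimeSpectrum.comap (S := Localization M) (algebraMap A (Localization M)))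
      = {q : PrimeSpectrum A | Ideal.comap (algebraMap R A) q.asIdeal ≤ p} := by
    rw [PrimeSpectrum.localization_comap_range (Localization M) M]
    ext q
    simp only [Set.mem_setOf_eq]
    constructor
    · intro h r hr
      by_contra hrp
      exact Set.disjoint_left.mp h ⟨r, hrp, rfl⟩ hr
    · intro h
      rw [Set.disjoint_left]
      rintro x ⟨r, hrp, rfl⟩ hxq
      exact hrp (h (Ideal.mem_comap.mpr hxq))
  have hemb := PrimeSpectrum.localization_comap_isEmbedding (R := A) (Localization M) M
  rw [← hrange]
  constructor
  · intro hc
    exact isConnected_range hemb.continuous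
  · intro hc
    refine { toPreconnectedSpace := ⟨?_⟩, toNonempty := ?_ }
    · have h2 := hemb.isInducing.isPreconnected_image
        (s := (Set.univ : Set (PrimeSpectrum (Localization M))))
      rw [Set.image_univ] at h2
      exact h2.mp hc.isPreconnected
    · obtain ⟨x, hx⟩ := hc.nonempty
      obtain ⟨y, rfl⟩ := hx
      exact ⟨y⟩

lemma rhs_of_cond (hdim : ringKrullDim R = 1) (hf : ∃ i, f i ≠ 0) (hc : Cond (f₀ := f₀) hf)
    (p : Ideal R) [hp : p.IsPrime] :
    ConnectedSpace (PrimeSpectrum (Localization (Submonoid.map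
      (algebraMap R A) p.primeCompl))) := by
  rw [connected_loc_iff hf p]
  constructor
  · exact ⟨etaPt hf, by rw [Set.mem_setOf_eq, st4 hf]; exact bot_le⟩
  · refine preconn_aux hf _ (by rw [Set.mem_setOf_eq, st4 hf]; exact bot_le) ?_
    intro q hq hq2
    have hall := not_eta_le_imp hf q hq2
    have h0 : algebraMap R A f₀ ∈ q.asIdeal := st2 q hall
    set p' := Ideal.comap (algebraMap R A) q.asIdeal with hp'_def
    have hp' : p'.IsPrime := pOf_isPrime q
    have hfi' : ∀ i, f i ∈ p' := fun i => Ideal.mem_comap.mpr (hall i)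
    have hf0' : f₀ ∈ p' := Ideal.mem_comap.mpr h0
    have hp'bot : p' ≠ ⊥ := pOf_ne_bot hf q hall
    obtain ⟨q', hxq', hηq'⟩ := hc p' hp' hfi' hf0'
    refine ⟨xiPt p' hp' hfi' hf0', q', ?_, ?_, hηq', ?_, hxq'⟩
    · rw [Set.mem_setOf_eq, st5 hp' hfi' hf0']
      exact hq
    · rw [Set.mem_setOf_eq]
      have hle : p' ≤ Ideal.comap (algebraMap R A) q'.asIdeal := by
        rw [← st5 hp' hfi' hf0']
        exact Ideal.comap_mono hxq'
      have := prime_eq_of_ne_bot hdim hp' (pOf_isPrime q') hp'bot hle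
      rw [← this]
      exact hq
    · exact st3 q hp' hfi' hf0' fun r hr => Ideal.mem_comap.mp hr

lemma cond_of_rhs (hdim : ringKrullDim R = 1) (hf : ∃ i, f i ≠ 0)
    (h : ∀ (p : Ideal R) [p.IsPrime],
      ConnectedSpace (PrimeSpectrum (Localization (Submonoid.map
        (algebraMap R A) p.primeCompl)))) : Cond (f₀ := f₀) hf := by
  intro p hp hfi h0
  by_contra hno
  push_neg at hno
  haveI := hp
  have hcS := (connected_loc_iff hf p).mp (h p)
  set ξ := xiPt p hp hfi h0 with hξ
  set S := {q : PrimeSpectrum A | Ideal.comap (algebraMap R A) q.asIdeal ≤ p} with hS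
  set u := (PrimeSpectrum.zeroLocus (ξ.asIdeal : Set A))ᶜ with hu
  set v := (closure ({etaPt hf} : Set (PrimeSpectrum A)))ᶜ with hv
  have hcover : S ⊆ u ∪ v := by
    intro q hq
    by_contra hq2
    simp only [Set.mem_union, not_or, hu, hv, Set.notMem_compl_iff] at hq2
    obtain ⟨h1, h2⟩ := hq2
    rw [PrimeSpectrum.mem_zeroLocus] at h1
    rw [← PrimeSpectrum.le_iff_mem_closure] at h2
    exact hno q h1 h2
  have hdisj : S ∩ (u ∩ v) = ∅ := by
    rw [Set.eq_empty_iff_forall_notMem]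
    rintro q ⟨hqS, hqu, hqv⟩
    have hη : ¬ etaPt hf ≤ q := by
      rw [hv, Set.mem_compl_iff] at hqv
      intro hle
      exact hqv ((PrimeSpectrum.le_iff_mem_closure _ _).mp hle)
    have hall := not_eta_le_imp hf q hη
    have h0' : algebraMap R A f₀ ∈ q.asIdeal := st2 q hall
    set p' := Ideal.comap (algebraMap R A) q.asIdeal with hp'_def
    have hp' : p'.IsPrime := pOf_isPrime q
    have hfi' : ∀ i, f i ∈ p' := fun i => Ideal.mem_comap.mpr (hall i)
    have hf0' : f₀ ∈ p' := Ideal.mem_comap.mpr h0'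
    have hp'bot : p' ≠ ⊥ := pOf_ne_bot hf q hall
    have he : p' = p := prime_eq_of_ne_bot hdim hp' hp hp'bot hqS
    have hxle : ξ ≤ q := by
      rw [hξ, xiPt_congr he.symm hp hfi h0 hp' hfi' hf0']
      exact st3 q hp' hfi' hf0' fun r hr => Ideal.mem_comap.mp hr
    rw [hu, Set.mem_compl_iff, PrimeSpectrum.mem_zeroLocus] at hqu
    exact hqu hxle
  rcases (isPreconnected_iff_subset_of_disjoint.mp hcS.isPreconnected u v
      (by rw [hu]; exact (PrimeSpectrum.isClosed_zeroLocus _).isOpen_compl)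
      (by rw [hv]; exact isClosed_closure.isOpen_compl) hcover hdisj) with hsub | hsub
  · have hξS : ξ ∈ S := by rw [hS, Set.mem_setOf_eq, hξ, st5 hp hfi h0]
    have := hsub hξS
    rw [hu, Set.mem_compl_iff, PrimeSpectrum.mem_zeroLocus] at this
    exact this le_rfl
  · have hηS : etaPt hf ∈ S := by rw [hS, Set.mem_setOf_eq, st4 hf]; exact bot_le
    have := hsub hηS
    rw [hv, Set.mem_compl_iff] at this
    exact this ((PrimeSpectrum.le_iff_mem_closure _ _).mp le_rfl)


end spec
end ForcingAux

/-- Corollary `onedimlocal`: Let `R` be a noetherian domain of Krull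
dimension `1`, `f_1,…,f_n,f₀ ∈ R` with `(f_1,…,f_n) ≠ 0`, and `A` the forcing algebra
`R[T_1,…,T_n]/(f_1T_1+⋯+f_nT_n+f₀)`. Then `Spec A` is connected iff for every prime
ideal `𝔭` of `R` the spectrum of the localization `A_{R∖𝔭}` is connected. -/
theorem one_dim_forcing_algebra_connected_iff_locally_connected
    (R : Type*) [CommRing R] [IsDomain R] [IsNoetherianRing R]
    (hdim : ringKrullDim R = 1)
    (n : ℕ) (f : Fin n → R) (f₀ : R) (hf : ∃ i, f i ≠ 0) :
    ConnectedSpace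
        (PrimeSpectrum (MvPolynomial (Fin n) R ⧸ Ideal.span {forcingPoly R n f f₀})) ↔
      ∀ (p : Ideal R) [p.IsPrime],
        ConnectedSpace (PrimeSpectrum (Localization (Submonoid.map
          (algebraMap R (MvPolynomial (Fin n) R ⧸ Ideal.span {forcingPoly R n f f₀}))
          p.primeCompl))) := by
  constructor
  · intro h p hp
    haveI := hp
    exact ForcingAux.rhs_of_cond hdim hf (ForcingAux.cond_of_connected hdim hf h) p
  · intro h
    exact ForcingAux.connected_of_cond hdim hf (ForcingAux.cond_of_rhs hdim hf h)
end
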